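/- arXiv:2601.22193 — 2 statements merged into one kernel-verified Lean document; each statement's English description precedes it below -/
import Mathlib

section
/- Let H and P be phylogenetic trees, let σ be a map from the leaves of P to the leaves of H, and let φ be a reconciliation of (H,P,σ). Let (u,v) and (u',v') be switching edges of P (not necessarily distinct) such that u is an ancestor of u' in P. If φ(u) is not the root of H, then G^φ contains a directed path from p(φ(u)) to φ(u') and a directed path from p(φ(u)) to φ(v'), each containing at least one strict arc; the same conclusion holds with φ(v) in place of φ(u) whenever φ(v) is not the root of H. -/
/-- A phylogenetic tree: a finite rooted full binary tree. Every vertex has a `parent`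
(the root being its own parent), iterating `parent` from any vertex reaches the root,
and every vertex has either `0` or `2` children. -/
structure PhyloTree (V : Type*) [Fintype V] [DecidableEq V] where
  root : V
  parent : V → V
  parent_root : parent root = root
  toRoot : ∀ v : V, ∃ n : ℕ, parent^[n] v = root
  binary : ∀ v : V,
      (Finset.univ.filter fun w => parent w = v ∧ w ≠ root).card = 0 ∨
      (Finset.univ.filter fun w => parent w = v ∧ w ≠ root).card = 2

namespace PhyloTree

variable {V : Type*} [Fintype V] [DecidableEq V]

/-- `T.ParentArc a b` : `a` is the parent of `b`; these are the arcs of the tree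
(the strict arcs, forming the set `A_par`). -/
def ParentArc (T : PhyloTree V) (a b : V) : Prop :=
  T.parent b = a ∧ b ≠ T.root

/-- `T.Anc a b` : `a` is an ancestor of `b`, equivalently `b` is a descendant of `a`
(this includes the case `a = b`). -/
def Anc (T : PhyloTree V) (a b : V) : Prop :=
  ∃ n : ℕ, T.parent^[n] b = a

/-- `a` and `b` are incomparable: neither is an ancestor of the other. -/
def Incomp (T : PhyloTree V) (a b : V) : Prop :=
  ¬ T.Anc a b ∧ ¬ T.Anc b a

/-- `a` and `b` are siblings: distinct nodes with the same parent. -/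
def Sibling (T : PhyloTree V) (a b : V) : Prop :=
  a ≠ b ∧ a ≠ T.root ∧ b ≠ T.root ∧ T.parent a = T.parent b

/-- `a` and `b` are cousins: their parents are siblings. -/
def Cousin (T : PhyloTree V) (a b : V) : Prop :=
  a ≠ T.root ∧ b ≠ T.root ∧ T.Sibling (T.parent a) (T.parent b)

/-- A leaf: a node with no children. -/
def IsLeaf (T : PhyloTree V) (a : V) : Prop := ∀ b, ¬ T.ParentArc a b

theorem parentArc_irrefl (T : PhyloTree V) (a : V) : ¬ T.ParentArc a a := by
  rintro ⟨h, hr⟩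
  obtain ⟨n, hn⟩ := T.toRoot a
  exact hr ((Function.iterate_fixed h n).symm.trans hn)

/-- The underlying undirected graph of the tree. -/
def ugraph (T : PhyloTree V) : SimpleGraph V where
  Adj a b := T.ParentArc a b ∨ T.ParentArc b a
  symm := ⟨fun _ _ h => h.symm⟩
  loopless := ⟨fun a h => by
    rcases h with h | h <;> exact T.parentArc_irrefl a h⟩

/-- `T.dist a b` : the number of edges on the unique undirected path between `a` and `b`. -/
noncomputable def dist (T : PhyloTree V) (a b : V) : ℕ := T.ugraph.dist a b

/-- `T.IsLCA c a b` : `c` is the lowest common ancestor of `a` and `b`. -/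
def IsLCA (T : PhyloTree V) (c a b : V) : Prop :=
  T.Anc c a ∧ T.Anc c b ∧ ∀ d, T.Anc d a → T.Anc d b → T.Anc d c

/-- The level of a node: `-dist(v, root)`, so nodes closer to the root have higher level. -/
noncomputable def level (T : PhyloTree V) (v : V) : ℤ := -(T.dist v T.root : ℤ)

/-- Arc `(a,b)` of the digraph `H⁺_d`: either a parent-to-child arc of the tree, or an
arc between distinct incomparable vertices at distance at most `d`. -/
def HplusArc (T : PhyloTree V) (d : ℕ) (a b : V) : Prop :=
  T.ParentArc a b ∨ (a ≠ b ∧ T.Incomp a b ∧ T.dist a b ≤ d)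

/-- `(a,b) ∈ A_sib` : arcs (in both directions) between siblings. -/
def SibArc (T : PhyloTree V) (a b : V) : Prop := T.Sibling a b

/-- `(a,b) ∈ A_nep` : arcs (in both directions) between a node and a child of its sibling. -/
def NepArc (T : PhyloTree V) (a b : V) : Prop :=
  (∃ s, T.Sibling s b ∧ T.ParentArc s a) ∨ (∃ s, T.Sibling s a ∧ T.ParentArc s b)

/-- `(a,b) ∈ A_gnep` : arcs (in both directions) between a node and a grandchild of its
sibling. -/
def GnepArc (T : PhyloTree V) (a b : V) : Prop :=
  (∃ s c, T.Sibling s b ∧ T.ParentArc s c ∧ T.ParentArc c a) ∨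
  (∃ s c, T.Sibling s a ∧ T.ParentArc s c ∧ T.ParentArc c b)

/-- `(a,b) ∈ A_cos` : arcs (in both directions) between cousins. -/
def CosArc (T : PhyloTree V) (a b : V) : Prop := T.Cousin a b

end PhyloTree

/-- A directed cycle in the digraph with arc relation `G`, represented as an injective
cyclic sequence `f` of `n ≥ 2` vertices in which every consecutive arc is present. -/
def IsDicycle {α : Type*} (G : α → α → Prop) {n : ℕ} (f : ZMod n → α) : Prop :=
  2 ≤ n ∧ Function.Injective f ∧ ∀ i, G (f i) (f (i + 1))

/-- There is a directed path from `s` to `t` in the digraph `G` containing at least one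
strict arc (i.e. parent-to-child arc of the tree `T`); here strict arcs of the graphs we
consider are always arcs of `G`. -/
def StrictReach {V : Type*} [Fintype V] [DecidableEq V] (T : PhyloTree V)
    (G : V → V → Prop) (s t : V) : Prop :=
  ∃ a b, Relation.ReflTransGen G s a ∧ T.ParentArc a b ∧ Relation.ReflTransGen G b t

section Reconciliation

variable {VH VP : Type*} [Fintype VH] [DecidableEq VH] [Fintype VP] [DecidableEq VP]

/-- Host-switch event: one of the children's images is incomparable to `hp`, the other is
a descendant of `hp`. -/
def SwitchEvent (TH : PhyloTree VH) (hp h1 h2 : VH) : Prop :=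
  (TH.Incomp h1 hp ∧ TH.Anc hp h2) ∨ (TH.Incomp h2 hp ∧ TH.Anc hp h1)

/-- Cospeciation event: the children's images are incomparable with LCA `hp`. -/
def CospEvent (TH : PhyloTree VH) (hp h1 h2 : VH) : Prop :=
  TH.Incomp h1 h2 ∧ TH.IsLCA hp h1 h2

/-- Duplication event: both children's images are descendants of `hp`, and neither the
host-switch case nor the cospeciation case applies. -/
def DupEvent (TH : PhyloTree VH) (hp h1 h2 : VH) : Prop :=
  TH.Anc hp h1 ∧ TH.Anc hp h2 ∧ ¬ SwitchEvent TH hp h1 h2 ∧ ¬ CospEvent TH hp h1 h2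

/-- `φ` is a reconciliation of `(H, P, σ)`: it agrees with `σ` on leaves, and at every
internal node exactly one of the three events (host switch, cospeciation, duplication)
applies. -/
def IsReconciliation (TH : PhyloTree VH) (TP : PhyloTree VP) (σ : VP → VH)
    (φ : VP → VH) : Prop :=
  (∀ p, TP.IsLeaf p → φ p = σ p) ∧
  ∀ p p1 p2, TP.ParentArc p p1 → TP.ParentArc p p2 → p1 ≠ p2 →
    SwitchEvent TH (φ p) (φ p1) (φ p2) ∨ CospEvent TH (φ p) (φ p1) (φ p2) ∨
      DupEvent TH (φ p) (φ p1) (φ p2)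

/-- `(u,v)` is a switching edge of `P` with respect to `φ` : `u` is the parent of `v` in
`P` and `φ u`, `φ v` are incomparable in `H`. -/
def SwitchingEdge (TH : PhyloTree VH) (TP : PhyloTree VP) (φ : VP → VH) (u v : VP) : Prop :=
  TP.ParentArc u v ∧ TH.Incomp (φ u) (φ v)

/-- Arc `(a,b)` of `G^φ` : either a (strict) parent-to-child arc of `H`, or a (relaxed)
arc coming, in either direction, from a switching edge. -/
def GphiArc (TH : PhyloTree VH) (TP : PhyloTree VP) (φ : VP → VH) (a b : VH) : Prop :=
  TH.ParentArc a b ∨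
    ∃ u v, SwitchingEdge TH TP φ u v ∧ ((a = φ u ∧ b = φ v) ∨ (a = φ v ∧ b = φ u))

/-- `φ` is strongly acyclic: no directed cycle of `G^φ` contains a strict arc. -/
def StronglyAcyclic (TH : PhyloTree VH) (TP : PhyloTree VP) (φ : VP → VH) : Prop :=
  ¬ ∃ (n : ℕ) (f : ZMod n → VH),
      IsDicycle (GphiArc TH TP φ) f ∧ ∃ i, TH.ParentArc (f i) (f (i + 1))

/-- Arc `(a,b)` of `D^φ` : either an arc of `H`, or an arc from the parent of `φ u` or of
`φ v` (when it exists) to `φ u'` or `φ v'`, for switching edges `(u,v)`, `(u',v')` with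
`u` an ancestor of `u'` in `P`. -/
def DphiArc (TH : PhyloTree VH) (TP : PhyloTree VP) (φ : VP → VH) (a b : VH) : Prop :=
  TH.ParentArc a b ∨
    ∃ u v u' v', SwitchingEdge TH TP φ u v ∧ SwitchingEdge TH TP φ u' v' ∧
      TP.Anc u u' ∧
      ((φ u ≠ TH.root ∧ a = TH.parent (φ u)) ∨ (φ v ≠ TH.root ∧ a = TH.parent (φ v))) ∧
      (b = φ u' ∨ b = φ v')

/-- `φ` is acyclic (time-feasible): `D^φ` contains no directed cycle. -/
def Acyclic (TH : PhyloTree VH) (TP : PhyloTree VP) (φ : VP → VH) : Prop :=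
  ¬ ∃ (n : ℕ) (f : ZMod n → VH), IsDicycle (DphiArc TH TP φ) f

end Reconciliation

/-- `G` contains no Type 1 cycle `(h_j, h_k, h_{k1})`, where `h_j`, `h_k` are siblings and
`h_{k1}` is a child of `h_k`. -/
def NoType1 {V : Type*} [Fintype V] [DecidableEq V] (T : PhyloTree V)
    (G : V → V → Prop) : Prop :=
  ¬ ∃ hj hk hk1, T.Sibling hj hk ∧ T.ParentArc hk hk1 ∧
      G hj hk ∧ G hk hk1 ∧ G hk1 hj

/-- `G` contains no Type 2 cycle `(h_j, h_{j1}, h_k, h_{k1})`, where `h_j`, `h_k` are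
siblings, `h_{j1}` is a child of `h_j` and `h_{k1}` is a child of `h_k`. -/
def NoType2 {V : Type*} [Fintype V] [DecidableEq V] (T : PhyloTree V)
    (G : V → V → Prop) : Prop :=
  ¬ ∃ hj hj1 hk hk1, T.Sibling hj hk ∧ T.ParentArc hj hj1 ∧ T.ParentArc hk hk1 ∧
      G hj hj1 ∧ G hj1 hk ∧ G hk hk1 ∧ G hk1 hj

/-- `G` contains no Type 3 cycle `(h_j, h_{k1}, h_{k3}, h_{k2})`, where `h_j`, `h_k` are
siblings, `h_{k1}`, `h_{k2}` are the children of `h_k`, and `h_{k3}` is a child of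
`h_{k1}`. -/
def NoType3 {V : Type*} [Fintype V] [DecidableEq V] (T : PhyloTree V)
    (G : V → V → Prop) : Prop :=
  ¬ ∃ hj hk hk1 hk2 hk3, T.Sibling hj hk ∧ hk1 ≠ hk2 ∧
      T.ParentArc hk hk1 ∧ T.ParentArc hk hk2 ∧ T.ParentArc hk1 hk3 ∧
      G hj hk1 ∧ G hk1 hk3 ∧ G hk3 hk2 ∧ G hk2 hj

/-!
Every parent–child edge `(p, c)` of `P` is followed by a walk from `φ p` to `φ c` in `G^φ`:
whichever event happens at `p`, `φ c` is either a descendant of `φ p`, reached along strict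
arcs, or incomparable to it, in which case `(p, c)` is a switching edge and gives a relaxed
arc. Hence `G^φ` has a walk from `φ u` to `φ u'`, which the switching edge `(u', v')` extends
to `φ v'`. Prepending the strict arc from the parent of `φ u`, or that arc followed by the
relaxed arc `φ v → φ u`, yields the four paths.
-/

namespace PhyloTree

variable {V : Type*} [Fintype V] [DecidableEq V] (T : PhyloTree V)

theorem reflTransGen_parentArc_of_anc {a b : V} (h : T.Anc a b) :
    Relation.ReflTransGen T.ParentArc a b := by
  obtain ⟨n, hn⟩ := h
  induction n generalizing b with
  | zero => exact hn ▸ .refl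
  | succ n ih =>
    rw [Function.iterate_succ_apply] at hn
    by_cases hb : b = T.root
    · rw [hb, T.parent_root] at hn
      exact hb ▸ ih hn
    · exact (ih hn).tail ⟨rfl, hb⟩

theorem exists_ne_parentArc_of_parentArc {p c : V} (hpc : T.ParentArc p c) :
    ∃ c', T.ParentArc p c' ∧ c' ≠ c := by
  have hc : c ∈ Finset.univ.filter fun w => T.parent w = p ∧ w ≠ T.root :=
    Finset.mem_filter.mpr ⟨Finset.mem_univ c, hpc⟩
  have hcard : 1 < (Finset.univ.filter fun w => T.parent w = p ∧ w ≠ T.root).card := by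
    rcases T.binary p with h0 | h2
    · exact absurd (Finset.card_pos.mpr ⟨c, hc⟩) (by omega)
    · omega
  obtain ⟨c', hc', hne⟩ := Finset.exists_mem_ne hcard c
  exact ⟨c', (Finset.mem_filter.mp hc').2, hne⟩

end PhyloTree

theorem StrictReach.of_reflTransGen_of_ne_root {V : Type*} [Fintype V] [DecidableEq V]
    {T : PhyloTree V} {G : V → V → Prop} {a t : V} (ha : a ≠ T.root)
    (h : Relation.ReflTransGen G a t) : StrictReach T G (T.parent a) t :=
  ⟨T.parent a, a, .refl, ⟨rfl, ha⟩, h⟩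

section Reconciliation

variable {VH VP : Type*} [Fintype VH] [DecidableEq VH] [Fintype VP] [DecidableEq VP]
  {TH : PhyloTree VH} {TP : PhyloTree VP} {φ : VP → VH}

theorem SwitchingEdge.gphiArc {u v : VP} (h : SwitchingEdge TH TP φ u v) :
    GphiArc TH TP φ (φ u) (φ v) :=
  .inr ⟨u, v, h, .inl ⟨rfl, rfl⟩⟩

theorem SwitchingEdge.gphiArc_symm {u v : VP} (h : SwitchingEdge TH TP φ u v) :
    GphiArc TH TP φ (φ v) (φ u) :=
  .inr ⟨u, v, h, .inr ⟨rfl, rfl⟩⟩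

theorem reflTransGen_gphiArc_of_anc {a b : VH} (h : TH.Anc a b) :
    Relation.ReflTransGen (GphiArc TH TP φ) a b :=
  Relation.ReflTransGen.mono (fun _ _ => .inl) _ _ (TH.reflTransGen_parentArc_of_anc h)

namespace IsReconciliation

variable {σ : VP → VH}

theorem anc_or_incomp_of_parentArc (hφ : IsReconciliation TH TP σ φ) {p c : VP}
    (hpc : TP.ParentArc p c) : TH.Anc (φ p) (φ c) ∨ TH.Incomp (φ p) (φ c) := by
  obtain ⟨c', hpc', hne⟩ := TP.exists_ne_parentArc_of_parentArc hpc
  rcases hφ.2 p c c' hpc hpc' hne.symm with hsw | hco | hdu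
  · rcases hsw with ⟨hinc, _⟩ | ⟨_, hanc⟩
    · exact .inr ⟨hinc.2, hinc.1⟩
    · exact .inl hanc
  · exact .inl hco.2.1
  · exact .inl hdu.1

theorem reflTransGen_gphiArc_of_parentArc (hφ : IsReconciliation TH TP σ φ) {p c : VP}
    (hpc : TP.ParentArc p c) : Relation.ReflTransGen (GphiArc TH TP φ) (φ p) (φ c) := by
  rcases hφ.anc_or_incomp_of_parentArc hpc with hanc | hinc
  · exact reflTransGen_gphiArc_of_anc hanc
  · exact .single (SwitchingEdge.gphiArc ⟨hpc, hinc⟩)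

theorem reflTransGen_gphiArc_of_anc (hφ : IsReconciliation TH TP σ φ) {p q : VP}
    (h : TP.Anc p q) : Relation.ReflTransGen (GphiArc TH TP φ) (φ p) (φ q) :=
  Relation.ReflTransGen.lift' φ (fun _ _ => hφ.reflTransGen_gphiArc_of_parentArc) _ _
    (TP.reflTransGen_parentArc_of_anc h)

end IsReconciliation

end Reconciliation

variable {VH VP : Type*} [Fintype VH] [DecidableEq VH] [Fintype VP] [DecidableEq VP]

theorem gphi_strict_paths_from_parent_general
    (TH : PhyloTree VH) (TP : PhyloTree VP) (σ : VP → VH)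
    (φ : VP → VH) (hφ : IsReconciliation TH TP σ φ)
    (u v u' v' : VP)
    (huv : SwitchingEdge TH TP φ u v) (huv' : SwitchingEdge TH TP φ u' v')
    (hanc : TP.Anc u u') :
    (φ u ≠ TH.root →
      StrictReach TH (GphiArc TH TP φ) (TH.parent (φ u)) (φ u') ∧
      StrictReach TH (GphiArc TH TP φ) (TH.parent (φ u)) (φ v')) ∧
    (φ v ≠ TH.root →
      StrictReach TH (GphiArc TH TP φ) (TH.parent (φ v)) (φ u') ∧
      StrictReach TH (GphiArc TH TP φ) (TH.parent (φ v)) (φ v')) := by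
  have path_u' := hφ.reflTransGen_gphiArc_of_anc hanc
  have path_v' := path_u'.tail huv'.gphiArc
  have arc_vu := huv.gphiArc_symm
  exact ⟨fun hu => ⟨.of_reflTransGen_of_ne_root hu path_u',
      .of_reflTransGen_of_ne_root hu path_v'⟩,
    fun hv => ⟨.of_reflTransGen_of_ne_root hv (path_u'.head arc_vu),
      .of_reflTransGen_of_ne_root hv (path_v'.head arc_vu)⟩⟩

/-- Let `(u,v)` and `(u',v')` be switching edges with `u` an ancestor of
`u'` in `P`. If `φ u` is not the root of `H`, then `G^φ` contains directed paths, each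
with at least one strict arc, from the parent of `φ u` to `φ u'` and to `φ v'`; and
likewise with `φ v` in place of `φ u` whenever `φ v` is not the root. -/
theorem gphi_strict_paths_from_parent
    (TH : PhyloTree VH) (TP : PhyloTree VP) (σ : VP → VH)
    (hσ : ∀ p, TP.IsLeaf p → TH.IsLeaf (σ p))
    (φ : VP → VH) (hφ : IsReconciliation TH TP σ φ)
    (u v u' v' : VP)
    (huv : SwitchingEdge TH TP φ u v) (huv' : SwitchingEdge TH TP φ u' v')
    (hanc : TP.Anc u u') :
    (φ u ≠ TH.root →
      StrictReach TH (GphiArc TH TP φ) (TH.parent (φ u)) (φ u') ∧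
      StrictReach TH (GphiArc TH TP φ) (TH.parent (φ u)) (φ v')) ∧
    (φ v ≠ TH.root →
      StrictReach TH (GphiArc TH TP φ) (TH.parent (φ v)) (φ u') ∧
      StrictReach TH (GphiArc TH TP φ) (TH.parent (φ v)) (φ v')) :=
  gphi_strict_paths_from_parent_general TH TP σ φ hφ u v u' v' huv huv' hanc
end

section
/- Let H and P be phylogenetic trees, let σ be a map from the leaves of P to the leaves of H, and let φ be a reconciliation of (H,P,σ) such that every switching edge (u,v) satisfies d_H(φ(u),φ(v)) ≤ 3. If G^φ contains no directed cycle of Type 1, Type 2, or Type 3, then φ is strongly acyclic, i.e., G^φ contains no directed cycle containing at least one strict arc. -/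
variable {VH VP : Type*} [Fintype VH] [DecidableEq VH] [Fintype VP] [DecidableEq VP]

/-!
A strict arc `a → b` of `G^φ` lies on a cycle exactly when `G^φ` has a path from `b` back to
`a`, so it suffices that no path leads from a proper descendant of a node `v` back to `v`.
Since every switching edge spans distance at most `3`, every arc of `G^φ` joins a node to a
child, a sibling, or a child of a sibling (or reversely). Hence a path can leave the subtree
below `v` only by an arc from a child `x` of `v` to the sibling `y` of `v`. Take the path to
visit `v` only at its end. Its last arc enters `v` from the parent of `v` (then induct on the
depth of `v`), from `y` (a Type 1 cycle), from a child of `y` (Type 2), or from the sibling `q`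
of the parent of `v`; in the last case the path from `y` to `q` leaves the subtree below the
parent of `v` through an arc `y → q`, closing a Type 3 cycle `q → v → x → y → q`.
-/

namespace Relation.ReflTransGen

variable {α : Type*} {r : α → α → Prop} {a b : α}

theorem exists_leaving_step {p : α → Prop} (h : ReflTransGen r a b) (ha : p a) (hb : ¬ p b) :
    ∃ x y, ReflTransGen r a x ∧ p x ∧ r x y ∧ ¬ p y ∧ ReflTransGen r y b := by
  induction h with
  | refl => exact absurd ha hb
  | @tail c d hac hcd ih =>
    by_cases hc : p c
    · exact ⟨c, d, hac, hc, hcd, hb, refl⟩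
    · obtain ⟨x, y, hax, hx, hxy, hy, hyc⟩ := ih hc
      exact ⟨x, y, hax, hx, hxy, hy, hyc.tail hcd⟩

theorem first_visit (h : ReflTransGen r a b) :
    ReflTransGen (fun x y => r x y ∧ x ≠ b) a b := by
  induction h using head_induction_on with
  | refl => exact refl
  | @head a c hac _ ih =>
    by_cases hab : a = b
    · rw [hab]
    · exact ih.head ⟨hac, hab⟩

theorem of_cyclic {n : ℕ} [NeZero n] {f : ZMod n → α} (hf : ∀ i, r (f i) (f (i + 1)))
    (i j : ZMod n) : ReflTransGen r (f i) (f j) := by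
  have forward : ∀ k : ℕ, ReflTransGen r (f i) (f (i + k)) := by
    intro k
    induction k with
    | zero => simpa using refl
    | succ k ih => exact ih.tail (by simpa [add_assoc] using hf (i + k))
  simpa using forward (j - i).val

end Relation.ReflTransGen

open Relation

namespace PhyloTree

variable {V : Type*} [Fintype V] [DecidableEq V]

/-- `a` is a proper ancestor of `b`, phrased through `T.parent b` so that it transfers between
siblings. -/
def ProperAnc (T : PhyloTree V) (a b : V) : Prop :=
  b ≠ T.root ∧ T.Anc a (T.parent b)

variable {T : PhyloTree V} {a b c : V}

theorem Anc.trans (hab : T.Anc a b) (hbc : T.Anc b c) : T.Anc a c := by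
  obtain ⟨m, hm⟩ := hab
  obtain ⟨n, hn⟩ := hbc
  exact ⟨m + n, by rw [Function.iterate_add_apply, hn, hm]⟩

theorem eq_root_of_anc_root (h : T.Anc a T.root) : a = T.root := by
  obtain ⟨n, hn⟩ := h
  rw [← hn, Function.iterate_fixed T.parent_root]

theorem anc_parent_self (a : V) : T.Anc (T.parent a) a := ⟨1, rfl⟩

theorem ProperAnc.anc (h : T.ProperAnc a b) : T.Anc a b :=
  h.2.trans (anc_parent_self b)

theorem Anc.trans_properAnc (hab : T.Anc a b) (hbc : T.ProperAnc b c) : T.ProperAnc a c :=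
  ⟨hbc.1, hab.trans hbc.2⟩

theorem properAnc_of_anc_of_ne (h : T.Anc a b) (hne : b ≠ a) : T.ProperAnc a b := by
  obtain ⟨_ | n, hn⟩ := h
  · exact absurd hn hne
  · refine ⟨fun hb => hne ?_, n, by rwa [Function.iterate_succ_apply] at hn⟩
    subst hb
    exact (eq_root_of_anc_root ⟨_, hn⟩).symm

theorem ParentArc.properAnc (h : T.ParentArc a b) : T.ProperAnc a b := ⟨h.2, 0, h.1⟩

theorem not_properAnc_self (a : V) : ¬ T.ProperAnc a a := by
  rintro ⟨ha, m, hm⟩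
  -- `a` is a periodic point of `parent`, and iterating `parent` from `a` reaches the root.
  have hper : Function.IsPeriodicPt T.parent (m + 1) a := hm
  obtain ⟨N, hN⟩ := T.toRoot a
  apply ha
  rw [← (hper.mul_const N).eq, show (m + 1) * N = m * N + N by ring,
    Function.iterate_add_apply, hN, Function.iterate_fixed T.parent_root]

theorem Sibling.symm (h : T.Sibling a b) : T.Sibling b a :=
  ⟨h.1.symm, h.2.2.1, h.2.1, h.2.2.2.symm⟩

theorem Sibling.properAnc_iff (h : T.Sibling b c) : T.ProperAnc a b ↔ T.ProperAnc a c := by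
  simp only [ProperAnc, h.2.1, h.2.2.1, h.2.2.2, ne_eq, not_false_eq_true, true_and]

theorem sibling_of_parentArc (hb : T.ParentArc a b) (hc : T.ParentArc a c) (hne : b ≠ c) :
    T.Sibling b c :=
  ⟨hne, hb.2, hc.2, hb.1.trans hc.1.symm⟩

theorem Sibling.unique (hb : T.Sibling a b) (hc : T.Sibling a c) : b = c := by
  by_contra hbc
  have hbinary := T.binary (T.parent a)
  set children := Finset.univ.filter fun w => T.parent w = T.parent a ∧ w ≠ T.root
  have hsub : ({a, b, c} : Finset V) ⊆ children := by
    intro w hw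
    simp only [Finset.mem_insert, Finset.mem_singleton] at hw
    rcases hw with rfl | rfl | rfl
    · simp [children, hb.2.1]
    · simp [children, hb.2.2.1, hb.2.2.2]
    · simp [children, hc.2.2.1, hc.2.2.2]
  have hcard : ({a, b, c} : Finset V).card = 3 := by
    rw [Finset.card_insert_of_notMem (by simp [hb.1, hc.1]),
      Finset.card_insert_of_notMem (by simp [hbc]), Finset.card_singleton]
  have := Finset.card_le_card hsub
  omega

theorem ParentArc.anc (h : T.ParentArc a b) : T.Anc a b := h.properAnc.anc

theorem Incomp.symm (h : T.Incomp a b) : T.Incomp b a := ⟨h.2, h.1⟩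

theorem Incomp.ne (h : T.Incomp a b) : a ≠ b := fun hab => h.1 (hab ▸ ⟨0, rfl⟩)

theorem reachable_root (a : V) : T.ugraph.Reachable a T.root := by
  obtain ⟨n, hn⟩ := T.toRoot a
  induction n generalizing a with
  | zero => rw [show a = T.root from hn]
  | succ n ih =>
    by_cases ha : a = T.root
    · rw [ha]
    · exact (SimpleGraph.Adj.reachable (Or.inr ⟨rfl, ha⟩)).trans (ih _ hn)

theorem sibArc_or_nepArc_of_incomp (hinc : T.Incomp a b) (hd : T.dist a b ≤ 3) :
    T.SibArc a b ∨ T.NepArc a b := by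
  obtain ⟨p, hp, hlen⟩ :=
    ((T.reachable_root a).trans (T.reachable_root b).symm).exists_path_of_dist
  have hl : p.length ≤ 3 := hlen ▸ hd
  have hne := hinc.ne
  rcases p with _ | ⟨h₁, _ | ⟨h₂, _ | ⟨h₃, _ | ⟨h₄, q⟩⟩⟩⟩
  · exact absurd rfl hne
  · rcases h₁ with h₁ | h₁
    · exact absurd h₁.anc hinc.1
    · exact absurd h₁.anc hinc.2
  · rcases h₁ with h₁ | h₁ <;> rcases h₂ with h₂ | h₂
    · exact absurd (h₁.anc.trans h₂.anc) hinc.1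
    · exact absurd (h₁.1.symm.trans h₂.1) hne
    · exact Or.inl (sibling_of_parentArc h₁ h₂ hne)
    · exact absurd (h₂.anc.trans h₁.anc) hinc.2
  · have hnodup := hp.support_nodup
    simp only [SimpleGraph.Walk.support_cons, SimpleGraph.Walk.support_nil, List.nodup_cons,
      List.mem_cons, List.not_mem_nil, or_false, not_or] at hnodup
    obtain ⟨⟨-, hay, -⟩, ⟨-, hxb⟩, -⟩ := hnodup
    rcases h₁ with h₁ | h₁ <;> rcases h₂ with h₂ | h₂ <;> rcases h₃ with h₃ | h₃
    · exact absurd (h₁.anc.trans (h₂.anc.trans h₃.anc)) hinc.1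
    · exact absurd (h₂.1.symm.trans h₃.1) hxb
    · exact absurd (h₁.1.symm.trans h₂.1) hay
    · exact absurd (h₁.1.symm.trans h₂.1) hay
    · exact Or.inr (Or.inr ⟨_, sibling_of_parentArc h₂ h₁ (Ne.symm hay), h₃⟩)
    · exact absurd (h₂.1.symm.trans h₃.1) hxb
    · exact Or.inr (Or.inl ⟨_, sibling_of_parentArc h₂ h₃ hxb, h₁⟩)
    · exact absurd (h₃.anc.trans (h₂.anc.trans h₁.anc)) hinc.2
  · simp only [SimpleGraph.Walk.length_cons] at hl
    omega

theorem HplusArc.parentArc_or_sibArc_or_nepArc (h : T.HplusArc 3 a b) :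
    T.ParentArc a b ∨ T.SibArc a b ∨ T.NepArc a b :=
  h.imp_right fun ⟨_, hinc, hd⟩ => sibArc_or_nepArc_of_incomp hinc hd

theorem not_hplusArc_root (d : ℕ) (a : V) : ¬ T.HplusArc d a T.root
  | .inl h => h.2 rfl
  | .inr ⟨_, hinc, _⟩ => hinc.2 (T.toRoot a)

theorem HplusArc.parentArc_sibling_of_exit {v : V} (h : T.HplusArc 3 a b)
    (ha : T.ProperAnc v a) (hb : ¬ T.ProperAnc v b) : T.ParentArc v a ∧ T.Sibling v b := by
  rcases h.parentArc_or_sibArc_or_nepArc with hab | hab | ⟨s, hsb, hsa⟩ | ⟨s, hsa, hsb⟩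
  · exact absurd (ha.anc.trans_properAnc hab.properAnc) hb
  · exact absurd (hab.properAnc_iff.1 ha) hb
  · by_cases hsv : s = v
    · subst hsv
      exact ⟨hsa, hsb⟩
    · exact absurd (hsb.properAnc_iff.1 (properAnc_of_anc_of_ne (hsa.1 ▸ ha.2) hsv)) hb
  · exact absurd ((hsa.properAnc_iff.2 ha).anc.trans_properAnc hsb.properAnc) hb

section Paths

variable {R : V → V → Prop}

theorem exists_exit_subtree (hR : ∀ a b, R a b → T.HplusArc 3 a b) {v : V}
    (h : ReflTransGen R a b) (ha : T.ProperAnc v a) (hb : ¬ T.ProperAnc v b) :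
    ∃ x y, ReflTransGen R a x ∧ T.ParentArc v x ∧ R x y ∧ T.Sibling v y ∧
      ReflTransGen R y b := by
  obtain ⟨x, y, hax, hx, hxy, hy, hyb⟩ := h.exists_leaving_step ha hb
  obtain ⟨hvx, hvy⟩ := (hR x y hxy).parentArc_sibling_of_exit hx hy
  exact ⟨x, y, hax, hvx, hxy, hvy, hyb⟩

theorem eq_root_of_reflTransGen_root (hR : ∀ a b, R a b → T.HplusArc 3 a b)
    (h : ReflTransGen R a T.root) : a = T.root := by
  rcases h.cases_tail with h | ⟨c, -, hc⟩
  · exact h.symm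
  · exact absurd (hR _ _ hc) (not_hplusArc_root 3 c)

theorem not_reflTransGen_of_properAnc_of_parent (hpar : ∀ a b, T.ParentArc a b → R a b)
    (hR : ∀ a b, R a b → T.HplusArc 3 a b) (h1 : NoType1 T R) (h2 : NoType2 T R)
    (h3 : NoType3 T R) {v : V}
    (ih : ∀ b, T.ProperAnc (T.parent v) b → ¬ ReflTransGen R b (T.parent v))
    (hb : T.ProperAnc v b) : ¬ ReflTransGen R b v := by
  intro hbv
  let R' x y := R x y ∧ x ≠ v
  have hR'R : ∀ a b, R' a b → R a b := fun _ _ h => h.1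
  have hR' : ∀ a b, R' a b → T.HplusArc 3 a b := fun a b h => hR a b h.1
  obtain ⟨x, y, hbx, hvx, ⟨hxy, -⟩, hvy, hyv⟩ :=
    exists_exit_subtree hR' hbv.first_visit hb (not_properAnc_self v)
  obtain ⟨q, hyq, hqv⟩ : ∃ q, ReflTransGen R' y q ∧ R q v := by
    rcases hyv.cases_tail with h | ⟨q, hyq, hqv, -⟩
    · exact absurd h hvy.1
    · exact ⟨q, hyq, hqv⟩
  rcases (hR q v hqv).parentArc_or_sibArc_or_nepArc with
    hq_parent | hq_sibling | ⟨s, hsv, hsq⟩ | ⟨s, hsq, hsv⟩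
  · refine ih b ((anc_parent_self v).trans_properAnc hb) ?_
    rw [hq_parent.1]
    exact ((ReflTransGen.mono hR'R _ _ hbx).tail hxy).trans (ReflTransGen.mono hR'R _ _ hyq)
  · obtain rfl : q = y := hq_sibling.symm.unique hvy
    exact h1 ⟨q, v, x, hq_sibling, hvx, hqv, hpar _ _ hvx, hxy⟩
  · obtain rfl : s = y := hsv.symm.unique hvy
    exact h2 ⟨v, x, s, q, hvy, hvx, hsq, hpar _ _ hvx, hxy, hpar _ _ hsq, hqv⟩
  · obtain rfl := hsv.1
    have hy : T.ProperAnc (T.parent v) y := hvy.properAnc_iff.1 hsv.properAnc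
    have hq : ¬ T.ProperAnc (T.parent v) q := fun h =>
      not_properAnc_self _ (hsq.properAnc_iff.2 h)
    obtain ⟨x', y', -, hx', ⟨hx'y', hx'v⟩, hy', -⟩ := exists_exit_subtree hR' hyq hy hq
    obtain rfl : y = x' := hvy.unique (sibling_of_parentArc hsv hx' hx'v.symm)
    obtain rfl : y' = q := hy'.unique hsq
    exact h3 ⟨y', T.parent v, v, y, x, hsq.symm, hvy.1, hsv, hx', hvx, hqv, hpar _ _ hvx, hxy,
      hx'y'⟩

theorem not_reflTransGen_of_properAnc (hpar : ∀ a b, T.ParentArc a b → R a b)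
    (hR : ∀ a b, R a b → T.HplusArc 3 a b) (h1 : NoType1 T R) (h2 : NoType2 T R)
    (h3 : NoType3 T R) (v : V) : ∀ b, T.ProperAnc v b → ¬ ReflTransGen R b v := by
  obtain ⟨n, hn⟩ := T.toRoot v
  induction n generalizing v with
  | zero =>
    intro b hb hbv
    rw [show v = T.root from hn] at hbv
    exact hb.1 (eq_root_of_reflTransGen_root hR hbv)
  | succ n ih =>
    exact fun b => not_reflTransGen_of_properAnc_of_parent hpar hR h1 h2 h3 (ih _ hn)

theorem not_reflTransGen_of_parentArc (hpar : ∀ a b, T.ParentArc a b → R a b)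
    (hR : ∀ a b, R a b → T.HplusArc 3 a b) (h1 : NoType1 T R) (h2 : NoType2 T R)
    (h3 : NoType3 T R) (h : T.ParentArc a b) : ¬ ReflTransGen R b a :=
  not_reflTransGen_of_properAnc hpar hR h1 h2 h3 a b h.properAnc

end Paths

end PhyloTree

theorem gphiArc_hplusArc {TH : PhyloTree VH} {TP : PhyloTree VP} {φ : VP → VH}
    (hdist : ∀ u v, SwitchingEdge TH TP φ u v → TH.dist (φ u) (φ v) ≤ 3) {a b : VH}
    (h : GphiArc TH TP φ a b) : TH.HplusArc 3 a b := by
  rcases h with h | ⟨u, v, hsw, ⟨rfl, rfl⟩ | ⟨rfl, rfl⟩⟩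
  · exact Or.inl h
  · exact Or.inr ⟨hsw.2.ne, hsw.2, hdist u v hsw⟩
  · exact Or.inr ⟨hsw.2.symm.ne, hsw.2.symm, (TH.ugraph.dist_comm).trans_le (hdist u v hsw)⟩

theorem dist3_no_short_implies_strongly_acyclic_general
    (TH : PhyloTree VH) (TP : PhyloTree VP) (φ : VP → VH)
    (hdist : ∀ u v, SwitchingEdge TH TP φ u v → TH.dist (φ u) (φ v) ≤ 3)
    (h1 : NoType1 TH (GphiArc TH TP φ)) (h2 : NoType2 TH (GphiArc TH TP φ))
    (h3 : NoType3 TH (GphiArc TH TP φ)) :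
    StronglyAcyclic TH TP φ := by
  rintro ⟨n, f, ⟨hn, -, hf⟩, i, hi⟩
  have : NeZero n := ⟨by omega⟩
  exact PhyloTree.not_reflTransGen_of_parentArc (fun _ _ => Or.inl)
    (fun _ _ => gphiArc_hplusArc hdist) h1 h2 h3 hi (.of_cyclic hf (i + 1) i)

/-- Let `φ` be a reconciliation whose switching edges all satisfy
`d_H(φ u, φ v) ≤ 3`. If `G^φ` contains no cycle of Type 1, 2 or 3, then `φ` is strongly
acyclic. -/
theorem dist3_no_short_implies_strongly_acyclic
    (TH : PhyloTree VH) (TP : PhyloTree VP) (σ : VP → VH)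
    (hσ : ∀ p, TP.IsLeaf p → TH.IsLeaf (σ p))
    (φ : VP → VH) (hφ : IsReconciliation TH TP σ φ)
    (hdist : ∀ u v, SwitchingEdge TH TP φ u v → TH.dist (φ u) (φ v) ≤ 3)
    (h1 : NoType1 TH (GphiArc TH TP φ)) (h2 : NoType2 TH (GphiArc TH TP φ))
    (h3 : NoType3 TH (GphiArc TH TP φ)) :
    StronglyAcyclic TH TP φ :=
  dist3_no_short_implies_strongly_acyclic_general TH TP φ hdist h1 h2 h3
end
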